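/- arXiv:1902.05050 — 5 statements merged into one kernel-verified Lean document; each statement's English description precedes it below -/
import Mathlib

section
/- Exponential convergence of the fluid solution (Theorem 2). Let α be a DDE initial condition with associated fluid solution (a,b). Define C₁ = sup_{h ≤ s ≤ 2h} |a(s) − h|, κ(r) = max{ 3/4, exp(−h/(3(r + h))) } for r ≥ 0, and μ = −(1/(2h)) log(κ(C₁/2)). Then for all t ≥ 4h: |b(t + h) − 2h| = |a(t) − h| ≤ C₁ · κ(C₁/2)^{−3/2} · e^{−μ t}. -/
/-!
Since the derivative of `b (t + h) - a t` vanishes, `b t = a (t - h) + h` for `t ≥ 2h`, so the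
deviation `f = a - h` solves the linear delay equation `f' t = (f (t - h) - 2 f t) / b t`, with
`b > 0` because `a` cannot reach `0` (there `a' = 1`). For this equation a first-crossing
argument gives a comparison principle: a supersolution `G` that dominates `|f|` on the initial
window `[h, 2h]` dominates it forever. With `G ≡ 1` this gives `|f| ≤ C₁`, hence `b ≤ C₁ + 2h`;
then `G t = exp (-μ (t - 2h))` is a supersolution because the choice of `κ` makes
`exp (μ h) + μ · 3 (C₁ / 2 + h) ≤ 2`.
-/

open MeasureTheory Set

noncomputable section

/-- `α = (a_h, u)` is a DDE initial condition: `a_h > 0` and `u : [0,h] → ℝ` is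
integrable with `0 ≤ u(t) ≤ 2`. -/
def IsDDEInit (h ah : ℝ) (u : ℝ → ℝ) : Prop :=
  0 < ah ∧ MeasureTheory.IntegrableOn u (Set.Icc 0 h) ∧
    ∀ t ∈ Set.Icc (0:ℝ) h, 0 ≤ u t ∧ u t ≤ 2

/-- `(a, b)` is the fluid solution associated to the DDE initial condition `(a_h, u)`. -/
def IsFluidSolution (h ah : ℝ) (u : ℝ → ℝ) (a b : ℝ → ℝ) : Prop :=
  ContinuousOn a (Set.Ici h) ∧ ContinuousOn b (Set.Ici h) ∧
  (∀ t ∈ Set.Icc h (2*h), b t = ah + t - h + ∫ s in (t-h)..h, u s) ∧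
  a h = ah ∧
  (∀ t ∈ Set.Ioc h (2*h), HasDerivWithinAt a (1 - 2 * a t / b t) (Set.Icc h (2*h)) t) ∧
  (∀ t, 2*h < t → HasDerivAt a (1 - 2 * a t / b t) t ∧
    HasDerivAt b (1 - 2 * a (t - h) / b (t - h)) t)

open Filter Topology

theorem eq_of_hasDerivAt_zero {f : ℝ → ℝ} {x y : ℝ} (hxy : x < y)
    (hf : ContinuousOn f (Icc x y)) (hf' : ∀ t ∈ Ioo x y, HasDerivAt f 0 t) : f y = f x := by
  obtain ⟨_, _, hslope⟩ := exists_hasDerivAt_eq_slope f (fun _ => 0) hxy hf hf'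
  rw [eq_comm, div_eq_zero_iff, sub_eq_zero] at hslope
  exact hslope.resolve_right (sub_ne_zero.2 hxy.ne')

theorem le_biSup_Icc_of_continuousOn {f : ℝ → ℝ} {x y s : ℝ} (hf : ContinuousOn f (Icc x y))
    (hs : s ∈ Icc x y) : f s ≤ ⨆ r ∈ Icc x y, f r := by
  refine le_ciSup₂ (f := fun r (_ : r ∈ Icc x y) => f r) ?_ s hs
  convert isCompact_Icc.bddAbove_image hf using 1
  ext r
  simp [eq_comm]

theorem pos_of_hasDerivWithinAt_pos_of_eq_zero {g : ℝ → ℝ} {c : ℝ}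
    (hg : ContinuousOn g (Ici c)) (hc : 0 < g c)
    (hzero : ∀ t, c < t → g t = 0 → (∀ s ∈ Ico c t, 0 < g s) →
      ∃ g' > 0, HasDerivWithinAt g g' (Iio t) t) :
    ∀ t, c ≤ t → 0 < g t := by
  by_contra! hneg
  set S := Ici c ∩ g ⁻¹' Iic 0
  have hSne : S.Nonempty := hneg
  have hSbdd : BddBelow S := ⟨c, fun s hs => hs.1⟩
  have ht₀ : sInf S ∈ S := (hg.preimage_isClosed_of_isClosed isClosed_Ici isClosed_Iic).csInf_mem
    hSne hSbdd
  set t₀ := sInf S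
  have hbefore : ∀ s ∈ Ico c t₀, 0 < g s := fun s hs =>
    not_le.1 fun hgs => (csInf_le hSbdd ⟨hs.1, hgs⟩).not_gt hs.2
  have hct₀ : c < t₀ := ht₀.1.lt_of_ne fun h => (ht₀.2.trans_lt (h ▸ hc)).false
  have hzero₀ : g t₀ = 0 := by
    obtain ⟨s, hs, hgs⟩ := intermediate_value_Icc' hct₀.le (hg.mono Icc_subset_Ici_self)
      ⟨ht₀.2, hc.le⟩
    rcases hs.2.lt_or_eq with hlt | rfl
    · exact absurd hgs (hbefore s ⟨hs.1, hlt⟩).ne'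
    · exact hgs
  obtain ⟨g', hg'pos, hg'⟩ := hzero t₀ hct₀ hzero₀ hbefore
  have hslope : Tendsto (slope g t₀) (𝓝[<] t₀) (𝓝 g') :=
    (hasDerivWithinAt_iff_tendsto_slope' self_notMem_Iio).1 hg'
  have hnonpos : ∀ᶠ s in 𝓝[<] t₀, slope g t₀ s ≤ 0 := by
    filter_upwards [Ioo_mem_nhdsLT hct₀] with s hs
    rw [slope_def_field, hzero₀]
    exact (div_neg_of_pos_of_neg (by simpa using hbefore s ⟨hs.1.le, hs.2⟩)
      (sub_neg.2 hs.2)).le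
  exact (le_of_tendsto hslope hnonpos).not_gt hg'pos

section DelayComparison

variable {f d : ℝ → ℝ} {c h : ℝ}

theorem lt_of_delay_barrier {B B' : ℝ → ℝ} (hh : 0 < h)
    (hf : ContinuousOn f (Ici c)) (hB : ∀ t, HasDerivAt B (B' t) t)
    (hd : ∀ t, c + h < t → 0 < d t)
    (hf' : ∀ t, c + h < t → HasDerivAt f ((f (t - h) - 2 * f t) / d t) t)
    (hbarrier : ∀ t, c + h < t → (B (t - h) - 2 * B t) / d t < B' t)
    (hinit : ∀ t ∈ Icc c (c + h), f t < B t) :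
    ∀ t, c ≤ t → f t < B t := by
  have hBcont : Continuous B := continuous_iff_continuousAt.2 fun t => (hB t).continuousAt
  suffices ∀ t, c ≤ t → 0 < B t - f t from fun t ht => sub_pos.1 (this t ht)
  refine pos_of_hasDerivWithinAt_pos_of_eq_zero (hBcont.continuousOn.sub hf)
    (sub_pos.2 (hinit c ⟨le_rfl, by linarith⟩)) fun t hct htouch hbefore => ?_
  rcases le_or_gt t (c + h) with hle | hlt
  · exact absurd htouch (sub_pos.2 (hinit t ⟨hct.le, hle⟩)).ne'
  refine ⟨B' t - (f (t - h) - 2 * f t) / d t, ?_, ((hB t).sub (hf' t hlt)).hasDerivWithinAt⟩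
  have hprev : f (t - h) < B (t - h) := sub_pos.1 (hbefore _ ⟨by linarith, by linarith⟩)
  have hslower : (f (t - h) - 2 * f t) / d t < (B (t - h) - 2 * B t) / d t := by
    rw [sub_eq_zero.1 htouch]
    gcongr
    exact hd t hlt
  linarith [hbarrier t hlt]

theorem le_of_delay_supersolution {G G' : ℝ → ℝ} {C : ℝ} (hh : 0 < h) (hC : 0 ≤ C)
    (hf : ContinuousOn f (Ici c)) (hG : ∀ t, HasDerivAt G (G' t) t)
    (hd : ∀ t, c + h < t → 0 < d t)
    (hf' : ∀ t, c + h < t → HasDerivAt f ((f (t - h) - 2 * f t) / d t) t)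
    (hsuper : ∀ t, c + h < t → (G (t - h) - 2 * G t) / d t ≤ G' t)
    (hinit : ∀ t ∈ Icc c (c + h), f t ≤ C * G t) :
    ∀ t, c ≤ t → f t ≤ C * G t := by
  intro t ht
  refine le_of_forall_pos_lt_add fun ε hε => lt_of_delay_barrier (B := fun s => C * G s + ε)
    hh hf (fun s => ((hG s).const_mul C).add_const ε) hd hf' (fun s hs => ?_)
    (fun s hs => by linarith [hinit s hs]) t ht
  have hds := hd s hs
  calc (C * G (s - h) + ε - 2 * (C * G s + ε)) / d s
      = C * ((G (s - h) - 2 * G s) / d s) - ε / d s := by field_simp; ring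
    _ < C * ((G (s - h) - 2 * G s) / d s) := sub_lt_self _ (div_pos hε hds)
    _ ≤ C * G' s := mul_le_mul_of_nonneg_left (hsuper s hs) hC

theorem abs_le_of_delay_supersolution {G G' : ℝ → ℝ} {C : ℝ} (hh : 0 < h) (hC : 0 ≤ C)
    (hf : ContinuousOn f (Ici c)) (hG : ∀ t, HasDerivAt G (G' t) t)
    (hd : ∀ t, c + h < t → 0 < d t)
    (hf' : ∀ t, c + h < t → HasDerivAt f ((f (t - h) - 2 * f t) / d t) t)
    (hsuper : ∀ t, c + h < t → (G (t - h) - 2 * G t) / d t ≤ G' t)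
    (hinit : ∀ t ∈ Icc c (c + h), |f t| ≤ C * G t) :
    ∀ t, c ≤ t → |f t| ≤ C * G t := by
  have hneg : ∀ t, c + h < t → HasDerivAt (-f) ((-f (t - h) - 2 * -f t) / d t) t :=
    fun t ht => (hf' t ht).neg.congr_deriv (by ring)
  intro t ht
  refine abs_le.2 ⟨neg_le.1 ?_, le_of_delay_supersolution hh hC hf hG hd hf' hsuper
    (fun s hs => (abs_le.1 (hinit s hs)).2) t ht⟩
  exact le_of_delay_supersolution hh hC hf.neg hG hd hneg hsuper
    (fun s hs => neg_le.1 (abs_le.1 (hinit s hs)).1) t ht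

theorem abs_le_of_delay {C : ℝ} (hh : 0 < h) (hf : ContinuousOn f (Ici c))
    (hd : ∀ t, c + h < t → 0 < d t)
    (hf' : ∀ t, c + h < t → HasDerivAt f ((f (t - h) - 2 * f t) / d t) t)
    (hinit : ∀ t ∈ Icc c (c + h), |f t| ≤ C) :
    ∀ t, c ≤ t → |f t| ≤ C := by
  have hC : 0 ≤ C := (abs_nonneg _).trans (hinit c ⟨le_rfl, by linarith⟩)
  simpa using abs_le_of_delay_supersolution (G := fun _ => 1) hh hC hf
    (fun t => hasDerivAt_const t 1) hd hf'
    (fun t ht => div_nonpos_of_nonpos_of_nonneg (by norm_num) (hd t ht).le)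
    (by simpa using hinit)

theorem abs_le_exp_of_delay {C D μ : ℝ} (hh : 0 < h) (hμ : 0 ≤ μ)
    (hrate : Real.exp (μ * h) + μ * D ≤ 2) (hf : ContinuousOn f (Ici c))
    (hd : ∀ t, c + h < t → 0 < d t ∧ d t ≤ D)
    (hf' : ∀ t, c + h < t → HasDerivAt f ((f (t - h) - 2 * f t) / d t) t)
    (hinit : ∀ t ∈ Icc c (c + h), |f t| ≤ C) :
    ∀ t, c ≤ t → |f t| ≤ C * Real.exp (-μ * (t - (c + h))) := by
  have hC : 0 ≤ C := (abs_nonneg _).trans (hinit c ⟨le_rfl, by linarith⟩)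
  set G : ℝ → ℝ := fun t => Real.exp (-μ * (t - (c + h)))
  have hG : ∀ t, HasDerivAt G (-μ * G t) t := fun t => by
    simpa [G, mul_comm] using ((hasDerivAt_id t).sub_const (c + h)).const_mul (-μ) |>.exp
  refine abs_le_of_delay_supersolution hh hC hf hG (fun t ht => (hd t ht).1) hf'
    (fun t ht => ?_) (fun t ht => ?_)
  · obtain ⟨hdt, hdD⟩ := hd t ht
    have hshift : G (t - h) = Real.exp (μ * h) * G t := by
      simp only [G, ← Real.exp_add]; ring_nf
    show (G (t - h) - 2 * G t) / d t ≤ -μ * G t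
    rw [div_le_iff₀ hdt, hshift]
    nlinarith [Real.exp_pos (-μ * (t - (c + h))), mul_le_mul_of_nonneg_left hdD hμ]
  · refine (hinit t ht).trans (le_mul_of_one_le_right hC (Real.one_le_exp ?_))
    nlinarith [ht.2]

end DelayComparison

theorem nonneg_and_exp_mul_add_mul_le_two {h D κ μ : ℝ} (hh : 0 < h) (hD : 0 < D) (hκ₀ : 4 / 9 ≤ κ)
    (hκD : Real.exp (-h / D) ≤ κ) (hκ₁ : κ ≤ 1) (hμ : μ = -(1 / (2 * h)) * Real.log κ) :
    0 ≤ μ ∧ Real.exp (μ * h) + μ * D ≤ 2 := by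
  have hκpos : 0 < κ := by linarith
  have hlog : -(2 * (μ * h)) = Real.log κ := by rw [hμ]; field_simp
  have hμ₀ : 0 ≤ μ := by
    have := Real.log_nonpos hκpos.le hκ₁
    nlinarith
  have hsq : Real.exp (μ * h) ^ 2 = κ⁻¹ := by
    rw [← Real.exp_nat_mul, ← Real.exp_log hκpos, ← Real.exp_neg, ← hlog]
    push_cast
    ring_nf
  have hexp : Real.exp (μ * h) ≤ 3 / 2 := by
    have : κ⁻¹ ≤ 9 / 4 := by simpa using inv_anti₀ (by norm_num) hκ₀
    nlinarith [Real.exp_pos (μ * h)]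
  have hμD : μ * D ≤ 1 / 2 := by
    have := (Real.le_log_iff_exp_le hκpos).2 hκD
    rw [← hlog, neg_div, neg_le_neg_iff, le_div_iff₀ hD] at this
    nlinarith
  exact ⟨hμ₀, by linarith⟩

namespace IsFluidSolution

variable {h ah : ℝ} {u a b : ℝ → ℝ}

theorem hasDerivAt_a_of_ne (hfl : IsFluidSolution h ah u a b) {t : ℝ} (ht : h < t)
    (ht₂ : t ≠ 2 * h) : HasDerivAt a (1 - 2 * a t / b t) t := by
  rcases ht₂.lt_or_gt with hlt | hgt
  · exact (hfl.2.2.2.2.1 t ⟨ht, hlt.le⟩).hasDerivAt (Icc_mem_nhds ht hlt)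
  · exact (hfl.2.2.2.2.2 t hgt).1

theorem hasDerivWithinAt_a_Iio (hfl : IsFluidSolution h ah u a b) {t : ℝ} (ht : h < t) :
    HasDerivWithinAt a (1 - 2 * a t / b t) (Iio t) t := by
  rcases le_or_gt t (2 * h) with hle | hgt
  · exact (hfl.2.2.2.2.1 t ⟨ht, hle⟩).mono_of_mem_nhdsWithin (Icc_mem_nhdsLT_of_mem ⟨ht, hle⟩)
  · exact (hfl.2.2.2.2.2 t hgt).1.hasDerivWithinAt

theorem b_add_eq (hh : 0 < h) (hfl : IsFluidSolution h ah u a b) :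
    ∀ t, h ≤ t → b (t + h) = a t + h := by
  have ⟨ha, hb, hbinit, hah, _, hab'⟩ := hfl
  set G : ℝ → ℝ := fun t => b (t + h) - a t
  have hGcont : ContinuousOn G (Ici h) :=
    (hb.comp (continuous_add_const h).continuousOn fun t (ht : h ≤ t) =>
      show h ≤ t + h by linarith).sub ha
  have hG' : ∀ t, h < t → t ≠ 2 * h → HasDerivAt G 0 t := fun t ht ht₂ => by
    have hbt := (hab' (t + h) (by linarith)).2
    rw [add_sub_cancel_right] at hbt
    exact ((hbt.comp_add_const t h).sub (hfl.hasDerivAt_a_of_ne ht ht₂)).congr_deriv (sub_self _)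
  have hconst : ∀ x y, h ≤ x → x < y → (∀ s ∈ Ioo x y, s ≠ 2 * h) → G y = G x :=
    fun x y hx hxy hs => eq_of_hasDerivAt_zero hxy (hGcont.mono fun s hs' => hx.trans hs'.1)
      fun s hs' => hG' s (hx.trans_lt hs'.1) (hs s hs')
  have hGh : G h = h := by
    simp only [G, hah, show h + h = 2 * h by ring, hbinit (2 * h) ⟨by linarith, le_rfl⟩,
      show 2 * h - h = h by ring, intervalIntegral.integral_same]
    ring
  suffices ∀ t, h ≤ t → G t = h from fun t ht => by linarith [this t ht]
  intro t ht
  rcases ht.eq_or_lt with rfl | hlt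
  · exact hGh
  rcases le_or_gt t (2 * h) with hle | hgt
  · exact (hconst h t le_rfl hlt fun s hs => (hs.2.trans_le hle).ne).trans hGh
  · rw [hconst (2 * h) t (by linarith) hgt fun s hs => hs.1.ne',
      hconst h (2 * h) le_rfl (by linarith) fun s hs => hs.2.ne, hGh]

theorem a_pos (hah : 0 < ah) (hfl : IsFluidSolution h ah u a b) : ∀ t, h ≤ t → 0 < a t :=
  pos_of_hasDerivWithinAt_pos_of_eq_zero hfl.1 (hfl.2.2.2.1 ▸ hah) fun t ht hzero _ =>
    ⟨1, one_pos, by simpa [hzero] using hfl.hasDerivWithinAt_a_Iio ht⟩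

theorem hasDerivAt_a_sub (hh : 0 < h) (hah : 0 < ah) (hfl : IsFluidSolution h ah u a b) {t : ℝ}
    (ht : 2 * h < t) :
    HasDerivAt (fun s => a s - h) ((a (t - h) - h - 2 * (a t - h)) / b t) t := by
  have hbt : b t = a (t - h) + h := by
    simpa using hfl.b_add_eq hh (t - h) (by linarith)
  have hbpos : 0 < b t := by linarith [hfl.a_pos hah (t - h) (by linarith)]
  refine ((hfl.2.2.2.2.2 t ht).1.sub_const h).congr_deriv ?_
  field_simp
  rw [hbt]
  ring

theorem abs_sub_le_exp (hh : 0 < h) (hah : 0 < ah) (hfl : IsFluidSolution h ah u a b)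
    {C D μ : ℝ} (hinit : ∀ t ∈ Icc h (2 * h), |a t - h| ≤ C) (hD : C + 2 * h ≤ D)
    (hμ : 0 ≤ μ) (hrate : Real.exp (μ * h) + μ * D ≤ 2) :
    ∀ t, h ≤ t → |a t - h| ≤ C * Real.exp (-μ * (t - 2 * h)) := by
  have h2h : h + h = 2 * h := by ring
  have hcont : ContinuousOn (fun s => a s - h) (Ici h) := hfl.1.sub continuousOn_const
  have hbt : ∀ t, h + h < t → b t = a (t - h) - h + 2 * h := fun t ht => by
    have := hfl.b_add_eq hh (t - h) (by linarith)
    rw [sub_add_cancel] at this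
    linarith
  have hbpos : ∀ t, h + h < t → 0 < b t := fun t ht => by
    linarith [hbt t ht, hfl.a_pos hah (t - h) (by linarith)]
  have hderiv : ∀ t, h + h < t →
      HasDerivAt (fun s => a s - h) ((a (t - h) - h - 2 * (a t - h)) / b t) t :=
    fun t ht => hfl.hasDerivAt_a_sub hh hah (by linarith)
  have hbounded := abs_le_of_delay hh hcont hbpos hderiv (h2h ▸ hinit)
  have hdecay := abs_le_exp_of_delay hh hμ hrate hcont (fun t ht => ⟨hbpos t ht, ?_⟩) hderiv
    (h2h ▸ hinit)
  · simpa [h2h] using hdecay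
  · linarith [hbt t ht, (abs_le.1 (hbounded (t - h) (by linarith))).2]

end IsFluidSolution

/-- **Theorem 2 (exponential convergence of the fluid solution).**
Let `α` be a DDE initial condition with associated fluid solution `(a, b)`. Define
`C₁ = sup_{h ≤ s ≤ 2h} |a(s) - h|`, `κ(r) = max(3/4, exp(-h/(3(r+h))))` and
`μ = -(1/(2h)) log κ(C₁/2)`. Then for all `t ≥ 4h`,
`|b(t+h) - 2h| = |a(t) - h| ≤ C₁ κ(C₁/2)^{-3/2} e^{-μ t}`. -/
theorem tangle_fluid_exponential_convergence
    (h ah : ℝ) (u : ℝ → ℝ) (hh : 0 < h)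
    (hα : IsDDEInit h ah u)
    (a b : ℝ → ℝ) (hfluid : IsFluidSolution h ah u a b)
    (C1 : ℝ) (hC1 : C1 = ⨆ s ∈ Set.Icc h (2*h), |a s - h|)
    (κ : ℝ → ℝ) (hκ : ∀ r, κ r = max (3/4) (Real.exp (-h / (3*(r + h)))))
    (μ : ℝ) (hμ : μ = -(1/(2*h)) * Real.log (κ (C1/2))) :
    ∀ t : ℝ, 4*h ≤ t →
      |b (t + h) - 2*h| = |a t - h| ∧
      |a t - h| ≤ C1 * (κ (C1/2)) ^ (-(3:ℝ)/2) * Real.exp (-μ * t) := by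
  intro t ht
  have hwin : ∀ s ∈ Icc h (2 * h), |a s - h| ≤ C1 := fun s hs =>
    hC1 ▸ le_biSup_Icc_of_continuousOn
      ((hfluid.1.mono Icc_subset_Ici_self).sub continuousOn_const).abs hs
  have hC1₀ : 0 ≤ C1 := (abs_nonneg _).trans (hwin h ⟨le_rfl, by linarith⟩)
  have hD : 0 < 3 * (C1 / 2 + h) := by positivity
  have hκC1 := hκ (C1 / 2)
  have hκ₁ : κ (C1 / 2) ≤ 1 := hκC1 ▸ max_le (by norm_num)
    (Real.exp_le_one_iff.2 (div_nonpos_of_nonpos_of_nonneg (by linarith) hD.le))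
  obtain ⟨hμ₀, hrate⟩ := nonneg_and_exp_mul_add_mul_le_two hh hD
    (hκC1 ▸ le_max_of_le_left (by norm_num)) (hκC1 ▸ le_max_right _ _) hκ₁ hμ
  have hκpos : 0 < κ (C1 / 2) := hκC1 ▸ lt_max_of_lt_left (by norm_num)
  refine ⟨by rw [hfluid.b_add_eq hh t (by linarith)]; ring_nf, ?_⟩
  calc |a t - h| ≤ C1 * Real.exp (-μ * (t - 2 * h)) :=
        hfluid.abs_sub_le_exp hh hα.1 hwin (by linarith) hμ₀ hrate t (by linarith)
    _ ≤ C1 * Real.exp (-μ * (t - 3 * h)) := by gcongr C1 * Real.exp ?_; nlinarith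
    _ = C1 * κ (C1 / 2) ^ (-(3:ℝ) / 2) * Real.exp (-μ * t) := by
        rw [Real.rpow_def_of_pos hκpos, mul_assoc, ← Real.exp_add, hμ]
        congr 2
        field_simp
        ring
end
end

section
/- Existence and uniqueness of the fluid solution (Lemma 1, existence part). Let α = (a_h, u) be a DDE initial condition. Then there exist unique functions a, b defined for t ≥ h such that: b(t) = a_h + t − h + ∫_{t−h}^h u(s) ds for t ∈ [h,2h]; a is differentiable on (h,2h] with a′(t) = 1 − 2a(t)/b(t) and a(h) = a_h; and for all t > 2h, a and b are differentiable and satisfy a′(t) = 1 − 2a(t)/b(t) and b′(t) = 1 − 2a(t−h)/b(t−h). Moreover a(t) > 0 for all t ≥ h. -/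
open MeasureTheory Set

noncomputable section

/-!
On `[h, 2h]` the function `b` is given and `a′ = 1 - 2a/b` is a linear equation, solved
explicitly by variation of constants; its solution stays positive. For `t > 2h` we have
`b′(t) = a′(t - h)`, so `b(t) = a(t - h) + h`: on each interval `[h + kh, h + (k+1)h]` the
coefficient `b` is determined by `a` on the previous one, and `a` again solves a linear equation
with a positive continuous coefficient (method of steps). Uniqueness follows interval by interval
from uniqueness for linear equations.
-/

open Filter Topology

section LinearODE

variable {c d x₀ : ℝ} {p q : ℝ → ℝ}

theorem eqOn_Icc_of_hasDerivAt_eq {f g f' : ℝ → ℝ} (hf : ContinuousOn f (Icc c d))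
    (hg : ContinuousOn g (Icc c d)) (hf' : ∀ t ∈ Ioo c d, HasDerivAt f (f' t) t)
    (hg' : ∀ t ∈ Ioo c d, HasDerivAt g (f' t) t) (h₀ : f c = g c) : EqOn f g (Icc c d) := by
  rintro t ⟨hct, htd⟩
  rcases hct.eq_or_lt with rfl | hct
  · exact h₀
  obtain ⟨s, -, hs⟩ := exists_hasDerivAt_eq_slope (fun x => f x - g x) (fun x => f' x - f' x)
    hct ((hf.sub hg).mono (Icc_subset_Icc_right htd))
    fun s hs => (hf' s ⟨hs.1, hs.2.trans_le htd⟩).sub (hg' s ⟨hs.1, hs.2.trans_le htd⟩)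
  rw [sub_self, eq_comm, div_eq_zero_iff, sub_eq_zero] at hs
  rcases hs with hs | hs
  · linarith
  · linarith

/-- Variation of constants for `x' = p - q x`, `x c = x₀`. -/
def linearODESol (p q : ℝ → ℝ) (c x₀ t : ℝ) : ℝ :=
  Real.exp (-∫ s in c..t, q s) * (x₀ + ∫ s in c..t, Real.exp (∫ r in c..s, q r) * p s)

theorem linearODESol_self : linearODESol p q c x₀ c = x₀ := by
  simp [linearODESol]

theorem hasDerivAt_linearODESol (hp : Continuous p) (hq : Continuous q) (t : ℝ) :
    HasDerivAt (linearODESol p q c x₀) (p t - q t * linearODESol p q c x₀ t) t := by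
  have hQ : ∀ s, HasDerivAt (fun s => ∫ r in c..s, q r) (q s) s := fun s =>
    hq.integral_hasStrictDerivAt c s |>.hasDerivAt
  have hE : Continuous fun s => Real.exp (∫ r in c..s, q r) * p s :=
    (Real.continuous_exp.comp (continuous_iff_continuousAt.2 fun s => (hQ s).continuousAt)).mul hp
  have hI := (hE.integral_hasStrictDerivAt c t).hasDerivAt.const_add x₀
  refine ((hQ t).neg.exp.mul hI).congr_deriv ?_
  simp only [linearODESol, Pi.neg_apply, Real.exp_neg]
  field_simp
  ring

theorem linearODESol_pos (hp : ∀ s, 0 ≤ p s) (hx₀ : 0 < x₀) {t : ℝ} (ht : c ≤ t) :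
    0 < linearODESol p q c x₀ t := by
  have : 0 ≤ ∫ s in c..t, Real.exp (∫ r in c..s, q r) * p s :=
    intervalIntegral.integral_nonneg ht fun s _ => mul_nonneg (Real.exp_pos _).le (hp s)
  unfold linearODESol
  positivity

/-- Uniqueness for `x' = p - q x`: the integrating factor `exp (∫ q)` turns `x - y` into a
function with zero derivative. -/
theorem eqOn_Icc_of_linearODE {x y : ℝ → ℝ} (hq : ContinuousOn q (Icc c d))
    (hx : ContinuousOn x (Icc c d)) (hy : ContinuousOn y (Icc c d))
    (hx' : ∀ t ∈ Ioo c d, HasDerivAt x (p t - q t * x t) t)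
    (hy' : ∀ t ∈ Ioo c d, HasDerivAt y (p t - q t * y t) t) (h₀ : x c = y c) :
    EqOn x y (Icc c d) := by
  rcases lt_or_ge d c with hdc | hcd
  · simp [Icc_eq_empty_of_lt hdc]
  set Q : ℝ → ℝ := fun t => ∫ s in c..t, q s
  have hQ : ContinuousOn Q (Icc c d) := by
    simpa [uIcc_of_le hcd] using
      intervalIntegral.continuousOn_primitive_interval (a := c) (b := d)
        (by simpa [uIcc_of_le hcd] using hq.integrableOn_Icc)
  have hQ' : ∀ t ∈ Ioo c d, HasDerivAt Q (q t) t := fun t ht =>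
    intervalIntegral.integral_hasDerivAt_right
      ((hq.mono (Icc_subset_Icc_right ht.2.le)).intervalIntegrable_of_Icc ht.1.le)
      ((hq.mono Ioo_subset_Icc_self).stronglyMeasurableAtFilter isOpen_Ioo t ht)
      (hq.continuousAt (Icc_mem_nhds ht.1 ht.2))
  have hzero : EqOn (fun t => (x t - y t) * Real.exp (Q t)) 0 (Icc c d) := by
    refine eqOn_Icc_of_hasDerivAt_eq ((hx.sub hy).mul hQ.rexp) continuousOn_const
      (f' := 0) (fun t ht => ?_) (fun t _ => hasDerivAt_const t 0) (by simp [h₀])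
    refine (((hx' t ht).sub (hy' t ht)).mul (hQ' t ht).exp).congr_deriv ?_
    simp only [Pi.sub_apply, Pi.zero_apply]
    ring
  intro t ht
  simpa [sub_eq_zero, (Real.exp_pos _).ne'] using hzero ht

theorem eqOn_Icc_of_fluidODE {B x y : ℝ → ℝ} (hB : ContinuousOn B (Icc c d))
    (hB₀ : ∀ t ∈ Icc c d, B t ≠ 0) (hx : ContinuousOn x (Icc c d))
    (hy : ContinuousOn y (Icc c d))
    (hx' : ∀ t ∈ Ioo c d, HasDerivAt x (1 - 2 * x t / B t) t)
    (hy' : ∀ t ∈ Ioo c d, HasDerivAt y (1 - 2 * y t / B t) t) (h₀ : x c = y c) :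
    EqOn x y (Icc c d) :=
  eqOn_Icc_of_linearODE (p := fun _ => 1) (q := fun t => 2 / B t)
    (continuousOn_const.div hB hB₀) hx hy (fun t ht => (hx' t ht).congr_deriv (by ring))
    (fun t ht => (hy' t ht).congr_deriv (by ring)) h₀

end LinearODE

section Fluid

variable {h ah : ℝ} {u : ℝ → ℝ}

def initialB (h ah : ℝ) (u : ℝ → ℝ) (t : ℝ) : ℝ := ah + t - h + ∫ s in (t - h)..h, u s

/-- The `b` of a fluid solution with first component `a`: integrating
`b′(t) = 1 - 2a(t-h)/b(t-h) = a′(t-h)` from `2h` gives `b(t) = a(t-h) + h` there. -/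
def delayedB (h ah : ℝ) (u : ℝ → ℝ) (a : ℝ → ℝ) (t : ℝ) : ℝ :=
  if t ≤ 2 * h then initialB h ah u t else a (t - h) + h

theorem initialB_continuousOn (hh : 0 ≤ h) (hu : IntegrableOn u (Icc 0 h)) :
    ContinuousOn (initialB h ah u) (Icc h (2 * h)) := by
  have hprim := intervalIntegral.continuousOn_primitive_interval_left (a := 0) (b := h)
    (by rwa [uIcc_of_le hh])
  rw [uIcc_of_le hh] at hprim
  refine ((continuousOn_const.add continuousOn_id).sub continuousOn_const).add
    (hprim.comp (continuousOn_id.sub continuousOn_const) fun t ht => ?_)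
  exact ⟨by linarith [ht.1], by linarith [ht.2]⟩

theorem initialB_pos (hah : 0 < ah) (hu : ∀ s ∈ Icc 0 h, 0 ≤ u s) {t : ℝ}
    (ht : t ∈ Icc h (2 * h)) : 0 < initialB h ah u t := by
  have : 0 ≤ ∫ s in (t - h)..h, u s :=
    intervalIntegral.integral_nonneg (by linarith [ht.2]) fun s hs =>
      hu s ⟨by linarith [hs.1, ht.1], hs.2⟩
  unfold initialB
  linarith [ht.1]

theorem delayedB_of_two_mul_le {a : ℝ → ℝ} (ha : a h = ah) {t : ℝ} (ht : 2 * h ≤ t) :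
    delayedB h ah u a t = a (t - h) + h := by
  unfold delayedB
  split_ifs with ht'
  · obtain rfl : t = 2 * h := le_antisymm ht' ht
    simp [initialB, two_mul, ha]
    ring
  · rfl

theorem delayedB_continuousOn (hh : 0 ≤ h) (hu : IntegrableOn u (Icc 0 h)) {a : ℝ → ℝ}
    (hac : ContinuousOn a (Ici h)) (ha : a h = ah) :
    ContinuousOn (delayedB h ah u a) (Ici h) := by
  rw [← Icc_union_Ici_eq_Ici (by linarith : h ≤ 2 * h)]
  refine ContinuousOn.union_of_isClosed ?_ ?_ isClosed_Icc isClosed_Ici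
  · exact (initialB_continuousOn hh hu).congr fun t ht => if_pos ht.2
  · refine ContinuousOn.congr ?_ fun t ht => delayedB_of_two_mul_le ha ht
    refine (hac.comp (continuousOn_id.sub continuousOn_const) fun t ht => ?_).add
      continuousOn_const
    exact show h ≤ t - h by linarith [show 2 * h ≤ t from ht]

theorem delayedB_pos (hh : 0 ≤ h) (hα : IsDDEInit h ah u) {a : ℝ → ℝ}
    (ha : ∀ t, h ≤ t → 0 < a t) {t : ℝ} (ht : h ≤ t) : 0 < delayedB h ah u a t := by
  unfold delayedB
  split_ifs with ht'
  · exact initialB_pos hα.1 (fun s hs => (hα.2.2 s hs).1) ⟨ht, ht'⟩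
  · linarith [ha (t - h) (by linarith)]

theorem delayedB_congr {a a' : ℝ → ℝ} {T : ℝ} (haa' : EqOn a a' (Icc h T)) :
    EqOn (delayedB h ah u a) (delayedB h ah u a') (Icc h (T + h)) := by
  intro t ht
  unfold delayedB
  split_ifs with ht'
  · rfl
  · rw [haa' ⟨by linarith, by linarith [ht.2]⟩]

theorem continuous_two_div_delayedB_max (hh : 0 ≤ h) (hα : IsDDEInit h ah u) {a : ℝ → ℝ}
    (hac : ContinuousOn a (Ici h)) (ha : a h = ah) (hpos : ∀ t, h ≤ t → 0 < a t) :
    Continuous fun t => 2 / delayedB h ah u a (max h t) :=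
  (continuousOn_const.div (delayedB_continuousOn hh hα.2.1 hac ha)
    fun _ ht => (delayedB_pos hh hα hpos ht).ne').comp_continuous
    (continuous_const.max continuous_id) fun t => le_max_left h t

/-- Method of steps: `fluidIter k` coincides with the fluid solution on `[h, h + k h]`.
The clamp `max h t` makes the coefficient continuous on all of `ℝ`. -/
def fluidIter (h ah : ℝ) (u : ℝ → ℝ) : ℕ → ℝ → ℝ
  | 0 => fun _ => ah
  | k + 1 =>
    linearODESol (fun _ => 1) (fun t => 2 / delayedB h ah u (fluidIter h ah u k) (max h t)) h ah

theorem fluidIter_spec (hh : 0 ≤ h) (hα : IsDDEInit h ah u) (k : ℕ) :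
    ContinuousOn (fluidIter h ah u k) (Ici h) ∧ fluidIter h ah u k h = ah ∧
      ∀ t, h ≤ t → 0 < fluidIter h ah u k t := by
  induction k with
  | zero => exact ⟨continuousOn_const, rfl, fun _ _ => hα.1⟩
  | succ k ih =>
    obtain ⟨hc, hk₀, hpos⟩ := ih
    have hq := continuous_two_div_delayedB_max hh hα hc hk₀ hpos
    refine ⟨fun t _ => ?_, linearODESol_self,
      fun t ht => linearODESol_pos (fun _ => zero_le_one) hα.1 ht⟩
    exact (hasDerivAt_linearODESol continuous_const hq t).continuousAt.continuousWithinAt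

theorem hasDerivAt_fluidIter_succ (hh : 0 ≤ h) (hα : IsDDEInit h ah u) (k : ℕ) {t : ℝ}
    (ht : h ≤ t) :
    HasDerivAt (fluidIter h ah u (k + 1))
      (1 - 2 * fluidIter h ah u (k + 1) t / delayedB h ah u (fluidIter h ah u k) t) t := by
  obtain ⟨hc, hk₀, hpos⟩ := fluidIter_spec hh hα k
  refine (hasDerivAt_linearODESol continuous_const
    (continuous_two_div_delayedB_max hh hα hc hk₀ hpos) t).congr_deriv ?_
  rw [max_eq_right ht]
  simp only [fluidIter]
  ring

theorem fluidIter_eqOn_succ (hh : 0 < h) (hα : IsDDEInit h ah u) (k : ℕ) :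
    EqOn (fluidIter h ah u k) (fluidIter h ah u (k + 1)) (Icc h (h + k * h)) := by
  induction k with
  | zero =>
    intro t ht
    obtain rfl : t = h := by simpa using ht
    rw [(fluidIter_spec hh.le hα 0).2.1, (fluidIter_spec hh.le hα 1).2.1]
  | succ k ih =>
    have hB := delayedB_congr (ah := ah) (u := u) ih
    have hT : h + ((k + 1 : ℕ) : ℝ) * h = h + k * h + h := by push_cast; ring
    rw [hT]
    obtain ⟨hc, hk₀, hpos⟩ := fluidIter_spec hh.le hα k
    refine eqOn_Icc_of_fluidODE
      ((delayedB_continuousOn hh.le hα.2.1 hc hk₀).mono Icc_subset_Ici_self)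
      (fun t ht => (delayedB_pos hh.le hα hpos ht.1).ne')
      ((fluidIter_spec hh.le hα _).1.mono Icc_subset_Ici_self)
      ((fluidIter_spec hh.le hα _).1.mono Icc_subset_Ici_self)
      (fun t ht => hasDerivAt_fluidIter_succ hh.le hα k ht.1.le) (fun t ht => ?_)
      (by rw [(fluidIter_spec hh.le hα _).2.1, (fluidIter_spec hh.le hα _).2.1])
    rw [hB (Ioo_subset_Icc_self ht)]
    exact hasDerivAt_fluidIter_succ hh.le hα (k + 1) ht.1.le

theorem fluidIter_eqOn (hh : 0 < h) (hα : IsDDEInit h ah u) {k j : ℕ} (hkj : k ≤ j) :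
    EqOn (fluidIter h ah u j) (fluidIter h ah u k) (Icc h (h + k * h)) := by
  induction j, hkj using Nat.le_induction with
  | base => exact eqOn_refl _ _
  | succ j hkj ih =>
    intro t ht
    have hsub : Icc h (h + k * h) ⊆ Icc h (h + j * h) := Icc_subset_Icc_right (by gcongr)
    exact (fluidIter_eqOn_succ hh hα j (hsub ht)).symm.trans (ih ht)

theorem le_add_natCeil_mul (hh : 0 < h) (t : ℝ) : t ≤ h + ⌈(t - h) / h⌉₊ * h := by
  have := Nat.le_ceil ((t - h) / h)
  rw [div_le_iff₀ hh] at this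
  linarith

theorem natCeil_le_of_le_add_mul (hh : 0 < h) {t : ℝ} {k : ℕ} (ht : t ≤ h + k * h) :
    ⌈(t - h) / h⌉₊ ≤ k :=
  Nat.ceil_le.2 <| (div_le_iff₀ hh).2 (by linarith)

def fluidA (h ah : ℝ) (u : ℝ → ℝ) (t : ℝ) : ℝ := fluidIter h ah u ⌈(t - h) / h⌉₊ t

def fluidB (h ah : ℝ) (u : ℝ → ℝ) : ℝ → ℝ := delayedB h ah u (fluidA h ah u)

theorem fluidA_eqOn (hh : 0 < h) (hα : IsDDEInit h ah u) (k : ℕ) :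
    EqOn (fluidA h ah u) (fluidIter h ah u k) (Icc h (h + k * h)) := fun t ht =>
  (fluidIter_eqOn hh hα (natCeil_le_of_le_add_mul hh ht.2)
    ⟨ht.1, le_add_natCeil_mul hh t⟩).symm

theorem fluidA_self (hh : 0 < h) (hα : IsDDEInit h ah u) : fluidA h ah u h = ah :=
  (fluidIter_spec hh.le hα _).2.1

theorem fluidA_pos (hh : 0 < h) (hα : IsDDEInit h ah u) {t : ℝ} (ht : h ≤ t) :
    0 < fluidA h ah u t :=
  (fluidIter_spec hh.le hα _).2.2 t ht

theorem fluidA_continuousOn (hh : 0 < h) (hα : IsDDEInit h ah u) :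
    ContinuousOn (fluidA h ah u) (Ici h) := by
  intro t ht
  set k := ⌈(t - h) / h⌉₊ + 1
  have htk : t < h + k * h := by
    have := le_add_natCeil_mul hh t
    simp only [k, Nat.cast_add, Nat.cast_one]
    linarith
  have hnhds : Icc h (h + k * h) ∈ 𝓝[Ici h] t :=
    mem_nhdsWithin.2 ⟨Iio (h + k * h), isOpen_Iio, htk, fun s hs => ⟨hs.2, le_of_lt hs.1⟩⟩
  exact ((fluidIter_spec hh.le hα k).1 t ht).congr_of_eventuallyEq
    (eventually_of_mem hnhds (fluidA_eqOn hh hα k)) (fluidA_eqOn hh hα k ⟨ht, htk.le⟩)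

theorem hasDerivAt_fluidA (hh : 0 < h) (hα : IsDDEInit h ah u) {t : ℝ} (ht : h < t) :
    HasDerivAt (fluidA h ah u) (1 - 2 * fluidA h ah u t / fluidB h ah u t) t := by
  set j := ⌈(t - h) / h⌉₊
  have htj := le_add_natCeil_mul hh t
  have htj' : t ∈ Ioo h (h + (j + 1 : ℕ) * h) := ⟨ht, by push_cast; linarith⟩
  have hA := fluidA_eqOn hh hα (j + 1)
  have hB : fluidB h ah u t = delayedB h ah u (fluidIter h ah u j) t :=
    delayedB_congr (fluidA_eqOn hh hα j) ⟨ht.le, by linarith⟩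
  rw [hA (Ioo_subset_Icc_self htj'), hB]
  exact (hasDerivAt_fluidIter_succ hh.le hα j ht.le).congr_of_eventuallyEq
    (eventually_of_mem (Icc_mem_nhds htj'.1 htj'.2) hA)

theorem hasDerivAt_fluidB (hh : 0 < h) (hα : IsDDEInit h ah u) {t : ℝ} (ht : 2 * h < t) :
    HasDerivAt (fluidB h ah u)
      (1 - 2 * fluidA h ah u (t - h) / fluidB h ah u (t - h)) t :=
  ((hasDerivAt_fluidA hh hα (by linarith)).comp_sub_const t h).add_const h
    |>.congr_of_eventuallyEq <| eventually_of_mem (Ioi_mem_nhds ht) fun _ hs =>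
      delayedB_of_two_mul_le (fluidA_self hh hα) (le_of_lt hs)

theorem isFluidSolution_fluidA (hh : 0 < h) (hα : IsDDEInit h ah u) :
    IsFluidSolution h ah u (fluidA h ah u) (fluidB h ah u) :=
  ⟨fluidA_continuousOn hh hα,
    delayedB_continuousOn hh.le hα.2.1 (fluidA_continuousOn hh hα) (fluidA_self hh hα),
    fun _ ht => if_pos ht.2, fluidA_self hh hα,
    fun _ ht => (hasDerivAt_fluidA hh hα ht.1).hasDerivWithinAt,
    fun _ ht => ⟨hasDerivAt_fluidA hh hα (by linarith), hasDerivAt_fluidB hh hα ht⟩⟩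

namespace IsFluidSolution

variable {a b a' b' : ℝ → ℝ}

theorem eqOn_Icc_two_mul (hs : IsFluidSolution h ah u a b) (hb : ∀ t, h ≤ t → 0 < b t)
    (hs' : IsFluidSolution h ah u a' b') :
    EqOn a' a (Icc h (2 * h)) ∧ EqOn b' b (Icc h (2 * h)) := by
  obtain ⟨hac, hbc, hbf, ha₀, ha', -⟩ := hs
  obtain ⟨ha'c, -, hb'f, ha'₀, ha'', -⟩ := hs'
  have hbb' : EqOn b' b (Icc h (2 * h)) := fun t ht => (hb'f t ht).trans (hbf t ht).symm
  refine ⟨eqOn_Icc_of_fluidODE (hbc.mono Icc_subset_Ici_self) (fun t ht => (hb t ht.1).ne')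
    (ha'c.mono Icc_subset_Ici_self) (hac.mono Icc_subset_Ici_self) (fun t ht => ?_)
    (fun t ht => (ha' t ⟨ht.1, ht.2.le⟩).hasDerivAt (Icc_mem_nhds ht.1 ht.2))
    (ha'₀.trans ha₀.symm), hbb'⟩
  rw [← hbb' (Ioo_subset_Icc_self ht)]
  exact (ha'' t ⟨ht.1, ht.2.le⟩).hasDerivAt (Icc_mem_nhds ht.1 ht.2)

theorem eqOn_Icc_add_of_eqOn (hh : 0 ≤ h) (hs : IsFluidSolution h ah u a b)
    (hb : ∀ t, h ≤ t → 0 < b t) (hs' : IsFluidSolution h ah u a' b') {c : ℝ}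
    (hc : 2 * h ≤ c)
    (ha : EqOn a' a (Icc h c)) (hbb : EqOn b' b (Icc h c)) :
    EqOn a' a (Icc c (c + h)) ∧ EqOn b' b (Icc c (c + h)) := by
  obtain ⟨hac, hbc, -, -, -, hd⟩ := hs
  obtain ⟨ha'c, hb'c, -, -, -, hd'⟩ := hs'
  have hsub : Icc c (c + h) ⊆ Ici h := fun t ht => show h ≤ t by linarith [ht.1]
  have hc₀ : c ∈ Icc h c := ⟨by linarith, le_rfl⟩
  have hbJ : EqOn b' b (Icc c (c + h)) := by
    refine eqOn_Icc_of_hasDerivAt_eq (hb'c.mono hsub) (hbc.mono hsub) (fun t ht => ?_)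
      (fun t ht => (hd t (by linarith [ht.1])).2) (hbb hc₀)
    have hth : t - h ∈ Icc h c := ⟨by linarith [ht.1], by linarith [ht.2]⟩
    rw [← ha hth, ← hbb hth]
    exact (hd' t (by linarith [ht.1])).2
  refine ⟨eqOn_Icc_of_fluidODE (hbc.mono hsub) (fun t ht => (hb t (hsub ht)).ne')
    (ha'c.mono hsub) (hac.mono hsub) (fun t ht => ?_)
    (fun t ht => (hd t (by linarith [ht.1])).1) (ha hc₀), hbJ⟩
  rw [← hbJ (Ioo_subset_Icc_self ht)]
  exact (hd' t (by linarith [ht.1])).1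

theorem eqOn_Icc (hh : 0 ≤ h) (hs : IsFluidSolution h ah u a b) (hb : ∀ t, h ≤ t → 0 < b t)
    (hs' : IsFluidSolution h ah u a' b') (k : ℕ) :
    EqOn a' a (Icc h (2 * h + k * h)) ∧ EqOn b' b (Icc h (2 * h + k * h)) := by
  induction k with
  | zero => simpa using hs.eqOn_Icc_two_mul hb hs'
  | succ k ih =>
    have hc : 2 * h ≤ 2 * h + k * h := le_add_of_nonneg_right (by positivity)
    have hunion : Icc h (2 * h + k * h) ∪ Icc (2 * h + k * h) (2 * h + k * h + h) =
        Icc h (2 * h + (k + 1 : ℕ) * h) := by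
      rw [Icc_union_Icc_eq_Icc (by linarith) (by linarith)]
      push_cast
      ring_nf
    obtain ⟨haJ, hbJ⟩ := hs.eqOn_Icc_add_of_eqOn hh hb hs' hc ih.1 ih.2
    rw [← hunion]
    exact ⟨ih.1.union haJ, ih.2.union hbJ⟩

end IsFluidSolution

end Fluid

/-- **Lemma 1 (existence and uniqueness of the fluid solution).**
For every DDE initial condition `α = (a_h, u)` there exist unique functions `(a, b)`
defined for `t ≥ h` which form the associated fluid solution; moreover `a(t) > 0`
for all `t ≥ h`. -/
theorem fluid_solution_exists_unique
    (h ah : ℝ) (u : ℝ → ℝ) (hh : 0 < h) (hα : IsDDEInit h ah u) :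
    ∃ a b : ℝ → ℝ, IsFluidSolution h ah u a b ∧
      (∀ t : ℝ, h ≤ t → 0 < a t) ∧
      ∀ a' b' : ℝ → ℝ, IsFluidSolution h ah u a' b' →
        ∀ t : ℝ, h ≤ t → a' t = a t ∧ b' t = b t := by
  have hsol := isFluidSolution_fluidA hh hα
  refine ⟨fluidA h ah u, fluidB h ah u, hsol, fun t ht => fluidA_pos hh hα ht, ?_⟩
  intro a' b' hs' t ht
  have hk := hsol.eqOn_Icc hh.le (fun t ht => delayedB_pos hh.le hα (fun _ => fluidA_pos hh hα) ht)
    hs' ⌈(t - h) / h⌉₊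
  have ht' : t ∈ Icc h (2 * h + ⌈(t - h) / h⌉₊ * h) :=
    ⟨ht, by linarith [le_add_natCeil_mul hh t]⟩
  exact ⟨hk.1 ht', hk.2 ht'⟩
end
end

section
/- Pathwise bound on the rescaled tip process in terms of the free-tip deviation. Let α be a DDE initial condition with fluid solution (a,b), let λ ≥ 1/h with m := λh ∈ ℕ, let v ∈ F(α,λ), and consider the tangle process with initial data (ξ_α, v). Define g(t) := sup_{h ≤ s ≤ t} |A^{(λ)}(s) − a(s)|. Then pathwise, for every t ≥ h: sup_{h ≤ s ≤ t} |B^{(λ)}(s) − b(s)| ≤ g(t) + 6 h^{1/2} λ^{−1/2}. -/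
/-!
For `s ≥ 2h` the tip count is a shifted free-tip count, `L_n = X_{n-m} + m`, and the fluid
solution obeys the same identity `b(s) = a(s - h) + h` (the derivative of `b(t) - a(t - h)`
vanishes), so the tip deviation at `s` is a free-tip deviation at `s - h ∈ [h, t]`. For
`s ∈ [h, 2h)` the tip count is determined by the initial data `v`, and `v ∈ F(α, λ)` controls
the deviation on the grid `t_n = n/λ` by `4 h^{1/2} λ^{-1/2} + λ⁻¹`; moving from `t_n` to `s`
costs another `λ⁻¹` because `b` is 1-Lipschitz on `[h, 2h]`, and `λ⁻¹ ≤ h^{1/2} λ^{-1/2}`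
since `λh ≥ 1`.
-/

open MeasureTheory Set

noncomputable section

/-- Membership `v ∈ F(α, λ)`: `v ∈ {0,1,2}^m` and the initial rescaled tip count
`B_v^{(λ)}(t_n) = L_n / λ`, where `L_{m+j} = ξ_α + j + Σ_{i=j+1}^m v_i` and
`ξ_α = max(⌊λ a_h⌋, 1)`, satisfies
`|B_v^{(λ)}(t_n) - b(t_n)| ≤ 4 h^{1/2} λ^{-1/2} + λ⁻¹` for all `m ≤ n ≤ 2m`. -/
def MemF (h ah lam : ℝ) (b : ℝ → ℝ) (m : ℕ) (v : ℕ → ℕ) : Prop :=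
  (∀ i, v i ≤ 2) ∧
  ∀ n : ℕ, m ≤ n → n ≤ 2*m →
    |(((max ⌊lam * ah⌋ 1 : ℤ) + ((n - m : ℕ) : ℤ)
        + ∑ i ∈ Finset.Icc (n - m + 1) m, (v i : ℤ) : ℤ) : ℝ) / lam
      - b ((n : ℝ) / lam)| ≤ 4 * Real.sqrt h / Real.sqrt lam + 1 / lam

lemma eq_of_continuousOn_of_hasDerivAt_zero {f : ℝ → ℝ} {c d : ℝ} (hcd : c ≤ d)
    (hf : ContinuousOn f (Icc c d)) (hder : ∀ x ∈ Ioo c d, HasDerivAt f 0 x) : f d = f c := by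
  rcases hcd.eq_or_lt with rfl | hlt
  · rfl
  obtain ⟨_, _, hslope⟩ := exists_hasDerivAt_eq_slope f (fun _ => 0) hlt hf hder
  rw [eq_comm, div_eq_zero_iff, sub_eq_zero, sub_eq_zero] at hslope
  exact hslope.resolve_right hlt.ne'

lemma one_div_le_sqrt_div_sqrt {h lam : ℝ} (hh : 0 < h) (hlam : 1 / h ≤ lam) :
    1 / lam ≤ Real.sqrt h / Real.sqrt lam := by
  have hlam0 : 0 < lam := (one_div_pos.2 hh).trans_le hlam
  have hsq : (1 / lam) ^ 2 ≤ h / lam := by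
    have := (div_le_iff₀ hh).1 hlam
    rw [div_pow, one_pow, div_le_div_iff₀ (by positivity) hlam0]
    nlinarith
  rw [← Real.sqrt_div' h hlam0.le]
  exact Real.le_sqrt_of_sq_le hsq

lemma le_biSup_of_bddAbove {α β : Type*} [ConditionallyCompleteLattice β] {S : Set α}
    {f : α → β} (hf : BddAbove (f '' S)) {r : α} (hr : r ∈ S) : f r ≤ ⨆ r ∈ S, f r := by
  refine le_ciSup₂ (f := fun r (_ : r ∈ S) => f r) ?_ r hr
  obtain ⟨B, hB⟩ := hf
  refine ⟨B, ?_⟩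
  rintro _ ⟨_, ⟨r, rfl⟩, hr, rfl⟩
  exact hB (mem_image_of_mem f hr)

lemma bddAbove_abs_floor_div_sub {lam h t : ℝ} (hlam : 0 ≤ lam) (X : ℕ → ℤ) {a : ℝ → ℝ}
    (ha : ContinuousOn a (Icc h t)) :
    BddAbove ((fun r => |(X ⌊lam * r⌋₊ : ℝ) / lam - a r|) '' Icc h t) := by
  obtain ⟨C, hC⟩ := isCompact_Icc.exists_bound_of_continuousOn ha
  set N := ⌊lam * t⌋₊
  refine ⟨(∑ k ∈ Finset.range (N + 1), |(X k : ℝ)|) / lam + C, ?_⟩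
  rintro _ ⟨r, hr, rfl⟩
  have hk : ⌊lam * r⌋₊ ∈ Finset.range (N + 1) :=
    Finset.mem_range_succ_iff.2 (Nat.floor_le_floor (mul_le_mul_of_nonneg_left hr.2 hlam))
  calc |(X ⌊lam * r⌋₊ : ℝ) / lam - a r|
      ≤ |(X ⌊lam * r⌋₊ : ℝ)| / lam + |a r| := by
        simpa only [abs_div, abs_of_nonneg hlam] using abs_sub ((X ⌊lam * r⌋₊ : ℝ) / lam) (a r)
    _ ≤ (∑ k ∈ Finset.range (N + 1), |(X k : ℝ)|) / lam + C := by
        gcongr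
        · exact Finset.single_le_sum (f := fun k => |(X k : ℝ)|) (fun _ _ => abs_nonneg _) hk
        · exact hC r hr

namespace IsFluidSolution

variable {h ah : ℝ} {u a b : ℝ → ℝ}

lemma b_eq_a_sub_add (hfluid : IsFluidSolution h ah u a b) (hh : 0 < h) {t : ℝ}
    (ht : 2 * h ≤ t) : b t = a (t - h) + h := by
  obtain ⟨haC, hbC, hbform, hah, hdW, hdF⟩ := hfluid
  set f : ℝ → ℝ := fun t => b t - a (t - h)
  have hfc : ContinuousOn f (Ici (2 * h)) :=
    (hbC.mono (Ici_subset_Ici.2 (by linarith))).sub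
      (haC.comp (continuousOn_id.sub continuousOn_const)
        (fun x hx => by simp only [mem_Ici] at *; linarith))
  have hf2h : f (2 * h) = h := by
    simp only [f, hbform (2 * h) ⟨by linarith, le_rfl⟩, show 2 * h - h = h by ring,
      intervalIntegral.integral_same, hah]
    ring
  -- `a` is only known to be differentiable at `2h` from the left, so `3h` is excluded.
  have hder : ∀ x, 2 * h < x → x ≠ 3 * h → HasDerivAt f 0 x := by
    intro x hx hx3
    have ha : HasDerivAt a (1 - 2 * a (x - h) / b (x - h)) (x - h) := by
      rcases lt_trichotomy (x - h) (2 * h) with hc | hc | hc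
      · exact (hdW (x - h) ⟨by linarith, hc.le⟩).hasDerivAt (Icc_mem_nhds (by linarith) hc)
      · exact absurd (by linarith : x = 3 * h) hx3
      · exact (hdF (x - h) hc).1
    have := (hdF x hx).2.sub (ha.comp_sub_const x h)
    rwa [sub_self] at this
  have hconst : ∀ {c d}, 2 * h ≤ c → c ≤ d → (∀ x ∈ Ioo c d, x ≠ 3 * h) → f d = f c :=
    fun hc hcd hne => eq_of_continuousOn_of_hasDerivAt_zero hcd
      (hfc.mono fun x hx => le_trans hc hx.1)
      (fun x hx => hder x (by linarith [hx.1]) (hne x hx))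
  suffices f t = h by simp only [f] at this; linarith
  rcases le_or_gt t (3 * h) with h3 | h3
  · rw [hconst le_rfl ht (fun x hx => hx.2.trans_le h3 |>.ne), hf2h]
  · rw [hconst (by linarith) h3.le (fun x hx => hx.1.ne'),
      hconst le_rfl (by linarith) (fun x hx => hx.2.ne), hf2h]

lemma abs_b_sub_b_le (hfluid : IsFluidSolution h ah u a b) (hα : IsDDEInit h ah u)
    {s₁ s₂ : ℝ} (h₁ : h ≤ s₁) (h₁₂ : s₁ ≤ s₂) (h₂ : s₂ ≤ 2 * h) :
    |b s₂ - b s₁| ≤ s₂ - s₁ := by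
  obtain ⟨-, hu, hub⟩ := hα
  have hint : ∀ x y : ℝ, x ∈ Icc 0 h → y ∈ Icc 0 h → IntervalIntegrable u volume x y :=
    fun x y hx hy => (hu.mono_set (uIcc_subset_Icc hx hy)).intervalIntegrable
  have hi₁ := hint (s₁ - h) (s₂ - h) ⟨by linarith, by linarith⟩ ⟨by linarith, by linarith⟩
  have hi₂ := hint (s₂ - h) h ⟨by linarith, by linarith⟩ ⟨by linarith, le_rfl⟩
  set J := ∫ s in (s₁ - h)..(s₂ - h), u s
  have hJ0 : 0 ≤ J := intervalIntegral.integral_nonneg (by linarith)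
    fun x hx => (hub x ⟨by linarith [hx.1], by linarith [hx.2]⟩).1
  have hJ2 : J ≤ 2 * (s₂ - s₁) := by
    have := intervalIntegral.integral_mono_on (by linarith) hi₁ intervalIntegrable_const
      (fun x hx => (hub x ⟨by linarith [hx.1], by linarith [hx.2]⟩).2)
    rw [intervalIntegral.integral_const, smul_eq_mul] at this
    linarith
  have hdiff : b s₂ - b s₁ = (s₂ - s₁) - J := by
    rw [hfluid.2.2.1 s₁ ⟨h₁, by linarith⟩, hfluid.2.2.1 s₂ ⟨by linarith, h₂⟩,
      ← intervalIntegral.integral_add_adjacent_intervals hi₁ hi₂]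
    ring
  rw [hdiff, abs_le]
  constructor <;> linarith

end IsFluidSolution

section TangleProcess

variable {m : ℕ} {U : ℕ → ℕ} {X W L : ℕ → ℤ}
  (hX : ∀ n, m ≤ n → X (n + 1) = X n + 1 - (U (n + 1) : ℤ))
  (hW : ∀ n, W n = ∑ j ∈ Finset.Icc (n - m + 1) n, (U j : ℤ))
  (hL : ∀ n, L n = W n + X n)

include hX in
lemma X_eq_add_sub_sum {k n : ℕ} (hk : m ≤ k) (hkn : k ≤ n) :
    X n = X k + ((n : ℤ) - k) - ∑ j ∈ Finset.Icc (k + 1) n, (U j : ℤ) := by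
  induction n, hkn using Nat.le_induction with
  | base => simp
  | succ n hkn ih =>
    rw [hX n (hk.trans hkn), ih, Finset.sum_Icc_succ_top (by omega)]
    push_cast
    ring

include hX hW hL in
lemma L_eq_of_le_two_mul {v : ℕ → ℕ} (hUinit : ∀ i, 1 ≤ i → i ≤ m → U i = v i) {n : ℕ}
    (hmn : m ≤ n) (hn : n ≤ 2 * m) :
    L n = X m + ((n - m : ℕ) : ℤ) + ∑ i ∈ Finset.Icc (n - m + 1) m, (v i : ℤ) := by
  have hsplit : ∑ j ∈ Finset.Icc (n - m + 1) n, (U j : ℤ)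
      = ∑ j ∈ Finset.Icc (n - m + 1) m, (U j : ℤ) + ∑ j ∈ Finset.Icc (m + 1) n, (U j : ℤ) := by
    simp only [Finset.Icc_add_one_left_eq_Ioc]
    exact (Finset.sum_Ioc_consecutive _ (by omega) hmn).symm
  have hv : ∑ i ∈ Finset.Icc (n - m + 1) m, (U i : ℤ) = ∑ i ∈ Finset.Icc (n - m + 1) m, (v i : ℤ) :=
    Finset.sum_congr rfl fun i hi => by
      rw [Finset.mem_Icc] at hi; rw [hUinit i (by omega) hi.2]
  rw [hL, hW, hsplit, hv, X_eq_add_sub_sum hX le_rfl hmn, Nat.cast_sub hmn]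
  ring

include hX hW hL in
lemma L_eq_X_sub_add {n : ℕ} (hn : 2 * m ≤ n) : L n = X (n - m) + m := by
  rw [hL, hW, X_eq_add_sub_sum hX (k := n - m) (by omega) (by omega), Nat.cast_sub (by omega)]
  ring

variable {h ah lam : ℝ} {u a b : ℝ → ℝ}

include hX hW hL in
lemma abs_L_div_sub_b_le_of_lt_two_mul (hh : 0 < h) (hα : IsDDEInit h ah u)
    (hfluid : IsFluidSolution h ah u a b) (hlam : 1 / h ≤ lam) (hmlam : (m : ℝ) = lam * h)
    {v : ℕ → ℕ} (hvF : MemF h ah lam b m v) (hUinit : ∀ i, 1 ≤ i → i ≤ m → U i = v i)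
    (hXm : X m = max ⌊lam * ah⌋ 1) {s : ℝ} (hs : h ≤ s) (hs2 : s < 2 * h) :
    |(L ⌊lam * s⌋₊ : ℝ) / lam - b s| ≤ 6 * Real.sqrt h / Real.sqrt lam := by
  have hlam0 : 0 < lam := (one_div_pos.2 hh).trans_le hlam
  set n := ⌊lam * s⌋₊
  have hmn : m ≤ n := Nat.le_floor (by rw [hmlam]; gcongr)
  have hn2m : n ≤ 2 * m := Nat.floor_le_of_le (by push_cast; rw [hmlam]; nlinarith)
  have hn_le : (n : ℝ) / lam ≤ s :=
    (div_le_iff₀ hlam0).2 (by rw [mul_comm]; exact Nat.floor_le (by nlinarith))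
  have hn_gt : s - 1 / lam ≤ n / lam := by
    rw [sub_le_iff_le_add, ← add_div, le_div_iff₀ hlam0, mul_comm]
    exact (Nat.lt_floor_add_one _).le
  have hh_le : h ≤ n / lam :=
    (le_div_iff₀ hlam0).2 (by rw [mul_comm, ← hmlam]; exact_mod_cast hmn)
  have hgrid := hvF.2 n hmn hn2m
  rw [← hXm, ← L_eq_of_le_two_mul hX hW hL hUinit hmn hn2m] at hgrid
  have hlip := hfluid.abs_b_sub_b_le hα hh_le hn_le hs2.le
  have hinv := one_div_le_sqrt_div_sqrt hh hlam
  calc |(L n : ℝ) / lam - b s|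
      ≤ |(L n : ℝ) / lam - b (n / lam)| + |b (n / lam) - b s| := abs_sub_le _ _ _
    _ ≤ 6 * Real.sqrt h / Real.sqrt lam := by
      rw [abs_sub_comm] at hlip
      rw [mul_div_assoc] at hgrid ⊢
      linarith

include hX hW hL in
lemma L_div_sub_b_eq_of_two_mul_le (hh : 0 < h) (hfluid : IsFluidSolution h ah u a b)
    (hlam0 : 0 < lam) (hmlam : (m : ℝ) = lam * h) {s : ℝ} (hs : 2 * h ≤ s) :
    (L ⌊lam * s⌋₊ : ℝ) / lam - b s = (X ⌊lam * (s - h)⌋₊ : ℝ) / lam - a (s - h) := by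
  have hn : 2 * m ≤ ⌊lam * s⌋₊ := Nat.le_floor (by push_cast; rw [hmlam]; nlinarith)
  rw [L_eq_X_sub_add hX hW hL hn, hfluid.b_eq_a_sub_add hh hs,
    show lam * (s - h) = lam * s - m by rw [hmlam]; ring, Nat.floor_sub_natCast]
  push_cast
  field_simp
  rw [hmlam]
  ring

end TangleProcess

theorem tangle_pathwise_B_bound_general
    (h ah : ℝ) (u : ℝ → ℝ) (hh : 0 < h)
    (hα : IsDDEInit h ah u)
    (a b : ℝ → ℝ) (hfluid : IsFluidSolution h ah u a b)
    (lam : ℝ) (hlam : 1/h ≤ lam)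
    (m : ℕ) (hmlam : (m : ℝ) = lam * h)
    (v : ℕ → ℕ) (hvF : MemF h ah lam b m v)
    (U : ℕ → ℕ)
    (hUinit : ∀ i, 1 ≤ i → i ≤ m → U i = v i)
    (X W L : ℕ → ℤ)
    (hXm : X m = max ⌊lam * ah⌋ 1)
    (hX : ∀ n, m ≤ n → X (n+1) = X n + 1 - (U (n+1) : ℤ))
    (hW : ∀ n, W n = ∑ j ∈ Finset.Icc (n - m + 1) n, (U j : ℤ))
    (hL : ∀ n, L n = W n + X n) :
    ∀ t : ℝ, h ≤ t → ∀ s : ℝ, h ≤ s → s ≤ t →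
      |(L ⌊lam * s⌋₊ : ℝ) / lam - b s|
        ≤ (⨆ r ∈ Set.Icc h t, |(X ⌊lam * r⌋₊ : ℝ) / lam - a r|)
          + 6 * Real.sqrt h / Real.sqrt lam := by
  intro t ht s hs hst
  have hlam0 : 0 < lam := (one_div_pos.2 hh).trans_le hlam
  have hg : ∀ r ∈ Icc h t, |(X ⌊lam * r⌋₊ : ℝ) / lam - a r|
      ≤ ⨆ r ∈ Icc h t, |(X ⌊lam * r⌋₊ : ℝ) / lam - a r| := fun r hr =>
    le_biSup_of_bddAbove (bddAbove_abs_floor_div_sub hlam0.le X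
      (hfluid.1.mono Icc_subset_Ici_self)) hr
  rcases lt_or_ge s (2 * h) with hs2 | hs2
  · have hg0 := (abs_nonneg _).trans (hg h ⟨le_rfl, ht⟩)
    have hearly := abs_L_div_sub_b_le_of_lt_two_mul hX hW hL hh hα hfluid hlam hmlam hvF hUinit hXm
      hs hs2
    linarith
  · rw [L_div_sub_b_eq_of_two_mul_le hX hW hL hh hfluid hlam0 hmlam hs2]
    exact le_add_of_le_of_nonneg (hg (s - h) ⟨by linarith, by linarith⟩) (by positivity)

/-- **Pathwise bound on the rescaled tip process in terms of the free-tip deviation.**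
Let `α` be a DDE initial condition with fluid solution `(a, b)`, let `λ ≥ 1/h` with
`m = λ h` a positive integer, let `v ∈ F(α, λ)`, and consider any sample path of the
tangle process with initial data `(ξ_α, v)`. With `A^{(λ)}(t) = X_{⌊λt⌋}/λ`,
`B^{(λ)}(t) = L_{⌊λt⌋}/λ` and `g(t) = sup_{h ≤ s ≤ t} |A^{(λ)}(s) - a(s)|`, one has
for every `t ≥ h`:
`sup_{h ≤ s ≤ t} |B^{(λ)}(s) - b(s)| ≤ g(t) + 6 h^{1/2} λ^{-1/2}`. -/
theorem tangle_pathwise_B_bound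
    (h ah : ℝ) (u : ℝ → ℝ) (hh : 0 < h)
    (hα : IsDDEInit h ah u)
    (a b : ℝ → ℝ) (hfluid : IsFluidSolution h ah u a b)
    (lam : ℝ) (hlam : 1/h ≤ lam)
    (m : ℕ) (hm : 1 ≤ m) (hmlam : (m : ℝ) = lam * h)
    (v : ℕ → ℕ) (hvF : MemF h ah lam b m v)
    (U : ℕ → ℕ) (hU : ∀ n, U n ≤ 2)
    (hUinit : ∀ i, 1 ≤ i → i ≤ m → U i = v i)
    (X W L : ℕ → ℤ)
    (hXm : X m = max ⌊lam * ah⌋ 1)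
    (hX : ∀ n, m ≤ n → X (n+1) = X n + 1 - (U (n+1) : ℤ))
    (hW : ∀ n, W n = ∑ j ∈ Finset.Icc (n - m + 1) n, (U j : ℤ))
    (hL : ∀ n, L n = W n + X n) :
    ∀ t : ℝ, h ≤ t → ∀ s : ℝ, h ≤ s → s ≤ t →
      |(L ⌊lam * s⌋₊ : ℝ) / lam - b s|
        ≤ (⨆ r ∈ Set.Icc h t, |(X ⌊lam * r⌋₊ : ℝ) / lam - a r|)
          + 6 * Real.sqrt h / Real.sqrt lam :=
  tangle_pathwise_B_bound_general h ah u hh hα a b hfluid lam hlam m hmlam v hvF U hUinit X W L hXm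
    hX hW hL
end
end

section
/- Non-expansiveness of the one-step delay map (first inequality of (pf2:6)). Fix h > 0, let x : [0,h] → ℝ be continuous with x(t) + h > 0 for all t ∈ [0,h], and let y : [0,h] → ℝ be the solution of y′(t) = (x(t) − 2y(t))/(2(x(t) + h)) with y(0) = x(h). Then for every t ∈ [0,h]: |y(t)| ≤ max{ |x(h)|, ‖x‖/2 }; in particular ‖y‖ ≤ ‖x‖. -/
/-!
Put `M := max |x h| (‖x‖ / 2)`. Wherever `y > M`, the numerator `x - 2y` of the right-hand side is
negative (since `x ≤ ‖x‖ ≤ 2M`) while the denominator is positive, so `y` cannot grow there;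
symmetrically `y` cannot decrease where `y < -M`. As `|y 0| = |x h| ≤ M`, `y` stays in `[-M, M]`,
and `M ≤ ‖x‖`.
-/

open Set

theorem le_biSup_of_bddAbove_image {α β : Type*} [ConditionallyCompleteLattice α] {f : β → α}
    {s : Set β} (H : BddAbove (f '' s)) {c : β} (hc : c ∈ s) : f c ≤ ⨆ i ∈ s, f i :=
  le_ciSup₂ (f := fun i (_ : i ∈ s) => f i)
    (H.mono (iUnion_subset fun _ => range_subset_iff.2 fun hi => mem_image_of_mem f hi)) c hc

/-- Perturbing the constant barrier `M` to `M + ε (1 + (s - a))` makes the boundary condition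
strict, so the fencing theorem applies; then let `ε → 0`. -/
theorem image_le_of_deriv_right_nonpos_of_lt {f f' : ℝ → ℝ} {a b M : ℝ}
    (hf : ContinuousOn f (Icc a b)) (hf' : ∀ s ∈ Ico a b, HasDerivWithinAt f (f' s) (Ici s) s)
    (ha : f a ≤ M) (bound : ∀ s ∈ Ico a b, M < f s → f' s ≤ 0) :
    ∀ ⦃t⦄, t ∈ Icc a b → f t ≤ M := by
  intro t ht
  have hbarrier : ∀ ε > 0, f t ≤ M + ε * (1 + (t - a)) := by
    intro ε hε
    refine image_le_of_deriv_right_lt_deriv_boundary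
      (B := fun s => M + ε * (1 + (s - a))) (B' := fun _ => ε) hf hf'
      (by simp only [sub_self, add_zero, mul_one]; linarith)
      (fun s => by simpa using ((hasDerivAt_id s).sub_const a |>.const_add 1 |>.const_mul ε
        |>.const_add M)) (fun s hs hfs => ?_) ht
    have hM : M < f s := by rw [hfs]; nlinarith [hs.1]
    exact (bound s hs hM).trans_lt hε
  refine le_of_forall_pos_le_add fun δ hδ => ?_
  have hpos : 0 < 1 + (t - a) := by linarith [ht.1]
  simpa [div_mul_cancel₀ δ hpos.ne'] using hbarrier (δ / (1 + (t - a))) (div_pos hδ hpos)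

theorem abs_le_of_hasDerivWithinAt_Icc {f f' : ℝ → ℝ} {a b M : ℝ}
    (hf : ∀ s ∈ Icc a b, HasDerivWithinAt f (f' s) (Icc a b) s) (ha : |f a| ≤ M)
    (upper : ∀ s ∈ Icc a b, M < f s → f' s ≤ 0) (lower : ∀ s ∈ Icc a b, f s < -M → 0 ≤ f' s) :
    ∀ t ∈ Icc a b, |f t| ≤ M := by
  have hcont : ContinuousOn f (Icc a b) := fun s hs => (hf s hs).continuousWithinAt
  have hright : ∀ s ∈ Ico a b, HasDerivWithinAt f (f' s) (Ici s) s := fun s hs =>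
    (hf s (Ico_subset_Icc_self hs)).mono_of_mem_nhdsWithin (Icc_mem_nhdsGE_of_mem hs)
  intro t ht
  rw [abs_le, neg_le]
  refine ⟨image_le_of_deriv_right_nonpos_of_lt (f' := fun s => -f' s) hcont.neg
      (fun s hs => (hright s hs).neg) ((neg_le_abs (f a)).trans ha) ?_ ht,
    image_le_of_deriv_right_nonpos_of_lt hcont hright ((le_abs_self _).trans ha)
      (fun s hs => upper s (Ico_subset_Icc_self hs)) ht⟩
  intro s hs hlt
  exact neg_nonpos.2 (lower s (Ico_subset_Icc_self hs) (lt_neg.1 hlt))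

theorem delay_map_nonexpansive_general
    (h : ℝ) (x y : ℝ → ℝ)
    (hxc : ContinuousOn x (Set.Icc 0 h))
    (hxpos : ∀ t ∈ Set.Icc (0:ℝ) h, 0 < x t + h)
    (hy0 : y 0 = x h)
    (hyode : ∀ t ∈ Set.Icc (0:ℝ) h,
      HasDerivWithinAt y ((x t - 2 * y t) / (2 * (x t + h))) (Set.Icc 0 h) t) :
    (∀ t ∈ Set.Icc (0:ℝ) h,
      |y t| ≤ max |x h| ((⨆ s ∈ Set.Icc (0:ℝ) h, |x s|) / 2)) ∧
    (⨆ t ∈ Set.Icc (0:ℝ) h, |y t|) ≤ ⨆ t ∈ Set.Icc (0:ℝ) h, |x t| := by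
  set K := ⨆ s ∈ Icc (0:ℝ) h, |x s|
  have hxK : ∀ s ∈ Icc 0 h, |x s| ≤ K := fun s hs =>
    le_biSup_of_bddAbove_image (isCompact_Icc.bddAbove_image hxc.abs) hs
  have hK : 0 ≤ K := Real.iSup_nonneg fun s => Real.iSup_nonneg fun _ => abs_nonneg (x s)
  set M := max |x h| (K / 2)
  have hxM : ∀ s ∈ Icc 0 h, |x s| ≤ 2 * M := fun s hs =>
    (hxK s hs).trans (by linarith [le_max_right |x h| (K / 2)])
  have hyM : ∀ t ∈ Icc 0 h, |y t| ≤ M := by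
    refine abs_le_of_hasDerivWithinAt_Icc hyode (hy0 ▸ le_max_left _ _)
      (fun s hs hlt => div_nonpos_of_nonpos_of_nonneg ?_ (by linarith [hxpos s hs]))
      (fun s hs hlt => div_nonneg ?_ (by linarith [hxpos s hs]))
    · linarith [le_abs_self (x s), hxM s hs]
    · linarith [neg_abs_le (x s), hxM s hs]
  refine ⟨hyM, Real.iSup_le (fun t => Real.iSup_le (fun ht => ?_) hK) hK⟩
  exact (hyM t ht).trans (max_le (hxK h ⟨ht.1.trans ht.2, le_rfl⟩) (by linarith))

/-- **Non-expansiveness of the one-step delay map (first inequality of (pf2:6)).**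
Fix `h > 0`, let `x : [0,h] → ℝ` be continuous with `x(t) + h > 0`, and let `y` solve
`y′ = (x - 2y)/(2(x + h))` on `[0,h]` with `y(0) = x(h)`. Then for every `t ∈ [0,h]`,
`|y(t)| ≤ max(|x(h)|, ‖x‖/2)`; in particular `‖y‖ ≤ ‖x‖`. -/
theorem delay_map_nonexpansive
    (h : ℝ) (hh : 0 < h) (x y : ℝ → ℝ)
    (hxc : ContinuousOn x (Set.Icc 0 h))
    (hxpos : ∀ t ∈ Set.Icc (0:ℝ) h, 0 < x t + h)
    (hy0 : y 0 = x h)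
    (hyode : ∀ t ∈ Set.Icc (0:ℝ) h,
      HasDerivWithinAt y ((x t - 2 * y t) / (2 * (x t + h))) (Set.Icc 0 h) t) :
    (∀ t ∈ Set.Icc (0:ℝ) h,
      |y t| ≤ max |x h| ((⨆ s ∈ Set.Icc (0:ℝ) h, |x s|) / 2)) ∧
    (⨆ t ∈ Set.Icc (0:ℝ) h, |y t|) ≤ ⨆ t ∈ Set.Icc (0:ℝ) h, |x t| :=
  delay_map_nonexpansive_general h x y hxc hxpos hy0 hyode
end

section
/- Two-step contraction of the delay map (second inequality of (pf2:6)). Fix h > 0, let x : [0,h] → ℝ be continuous with x(t) + h > 0 for all t ∈ [0,h], and let y : [0,h] → ℝ be the solution of y′(t) = (x(t) − 2y(t))/(2(x(t) + h)) with y(0) = x(h). Suppose also that y(t) + h > 0 for all t ∈ [0,h], and let z : [0,h] → ℝ be the solution of z′(t) = (y(t) − 2z(t))/(2(y(t) + h)) with z(0) = y(h). Then ‖z‖ ≤ κ(‖x‖) · ‖x‖, where κ(r) = max{ 3/4, exp(−h/(3(r + h))) }. -/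
/-!
Write `M = ‖x‖` and `c = M + h`. On `[0, h]` the coefficient `2 (x + h)` lies in `(0, 2c]`, so
above the level `M / 2` the solution decays at least like `exp (-t / c)`: a barrier argument gives
`|y t| ≤ M / 2 + K exp (-t / c)` whenever `|y 0| ≤ M / 2 + K`. Starting from `|y 0| ≤ M` this
yields `‖y‖ ≤ M` and `|y h| ≤ M / 2 + (M / 2) exp (-h / c)`; feeding both into the same estimate
for `z` gives `‖z‖ ≤ M (1 + β³) / 2` with `β = exp (-h / (3c))`, and `(1 + β³) / 2 ≤ max (3/4) β`.
-/

open Set Filter Topology Real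

theorem IsCompact.le_biSup_of_continuousOn {α : Type*} [TopologicalSpace α] {s : Set α}
    {f : α → ℝ} (hs : IsCompact s) (hf : ContinuousOn f s) {t : α} (ht : t ∈ s) :
    f t ≤ ⨆ u ∈ s, f u := by
  refine le_ciSup₂ (f := fun u (_ : u ∈ s) => f u) ?_ t ht
  convert hs.bddAbove_image hf using 1
  ext
  simp [eq_comm]

theorem le_half_add_mul_exp_of_hasDerivWithinAt_of_lt {T M K c : ℝ} {x p y : ℝ → ℝ}
    (hK : 0 < K) (hx : ∀ t ∈ Icc 0 T, x t ≤ M) (hp : ∀ t ∈ Icc 0 T, 0 < p t)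
    (hpc : ∀ t ∈ Icc 0 T, p t < c)
    (hy : ∀ t ∈ Icc 0 T, HasDerivWithinAt y ((x t - 2 * y t) / (2 * p t)) (Icc 0 T) t)
    (hy0 : y 0 ≤ M / 2 + K) :
    ∀ t ∈ Icc 0 T, y t ≤ M / 2 + K * exp (-t / c) := by
  have hB : ∀ t, HasDerivAt (fun t => M / 2 + K * exp (-t / c)) (-(K * exp (-t / c) / c)) t :=
    fun t => ((((hasDerivAt_neg t).div_const c).exp.const_mul K).const_add (M / 2)).congr_deriv
      (by ring)
  refine image_le_of_deriv_right_lt_deriv_boundary (fun t ht => (hy t ht).continuousWithinAt)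
    (fun t ht => (hy t (Ico_subset_Icc_self ht)).mono_of_mem_nhdsWithin
      (Icc_mem_nhdsGE_of_mem ht)) (by simpa using hy0) hB ?_
  intro s hs hys
  have hs := Ico_subset_Icc_self hs
  have hE : 0 < K * exp (-s / c) := by positivity
  calc (x s - 2 * y s) / (2 * p s) ≤ -(K * exp (-s / c) / p s) := by
        rw [← neg_div, div_le_div_iff₀ (by linarith [hp s hs]) (hp s hs)]
        nlinarith [hx s hs, hp s hs]
    _ < -(K * exp (-s / c) / c) := neg_lt_neg (div_lt_div_of_pos_left hE (hp s hs) (hpc s hs))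

theorem le_half_add_mul_exp_of_hasDerivWithinAt {T M K c : ℝ} {x p y : ℝ → ℝ}
    (hK : 0 ≤ K) (hx : ∀ t ∈ Icc 0 T, x t ≤ M) (hp : ∀ t ∈ Icc 0 T, 0 < p t)
    (hpc : ∀ t ∈ Icc 0 T, p t ≤ c)
    (hy : ∀ t ∈ Icc 0 T, HasDerivWithinAt y ((x t - 2 * y t) / (2 * p t)) (Icc 0 T) t)
    (hy0 : y 0 ≤ M / 2 + K) :
    ∀ t ∈ Icc 0 T, y t ≤ M / 2 + K * exp (-t / c) := by
  -- the strict barrier `M / 2 + (K + ε) exp (-t / (c + ε))` tends to this one as `ε → 0+`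
  intro t ht
  have hc : c ≠ 0 := (lt_of_lt_of_le (hp t ht) (hpc t ht)).ne'
  have hlim : Tendsto (fun ε => M / 2 + (K + ε) * exp (-t / (c + ε))) (𝓝[>] 0)
      (𝓝 (M / 2 + K * exp (-t / c))) := by
    have : ContinuousAt (fun ε => M / 2 + (K + ε) * exp (-t / (c + ε))) 0 := by
      fun_prop (disch := simpa using hc)
    simpa using this.tendsto.mono_left nhdsWithin_le_nhds
  refine ge_of_tendsto hlim ?_
  filter_upwards [self_mem_nhdsWithin] with ε (hε : 0 < ε)
  exact le_half_add_mul_exp_of_hasDerivWithinAt_of_lt (by linarith) hx hp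
    (fun s hs => by linarith [hpc s hs]) hy (by linarith) t ht

theorem abs_le_half_add_mul_exp_of_hasDerivWithinAt {T M K c : ℝ} {x p y : ℝ → ℝ}
    (hK : 0 ≤ K) (hx : ∀ t ∈ Icc 0 T, |x t| ≤ M) (hp : ∀ t ∈ Icc 0 T, 0 < p t)
    (hpc : ∀ t ∈ Icc 0 T, p t ≤ c)
    (hy : ∀ t ∈ Icc 0 T, HasDerivWithinAt y ((x t - 2 * y t) / (2 * p t)) (Icc 0 T) t)
    (hy0 : |y 0| ≤ M / 2 + K) :
    ∀ t ∈ Icc 0 T, |y t| ≤ M / 2 + K * exp (-t / c) := by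
  have hneg : ∀ t ∈ Icc 0 T, -y t ≤ M / 2 + K * exp (-t / c) :=
    le_half_add_mul_exp_of_hasDerivWithinAt (x := fun t => -x t) (y := fun t => -y t) hK
      (fun t ht => (neg_le_abs _).trans (hx t ht)) hp hpc
      (fun t ht => (hy t ht).neg.congr_deriv (by ring)) ((neg_le_abs _).trans hy0)
  have hpos : ∀ t ∈ Icc 0 T, y t ≤ M / 2 + K * exp (-t / c) :=
    le_half_add_mul_exp_of_hasDerivWithinAt hK (fun t ht => (le_abs_self _).trans (hx t ht))
      hp hpc hy ((le_abs_self _).trans hy0)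
  exact fun t ht => abs_le.2 ⟨by linarith [hneg t ht], hpos t ht⟩

theorem one_add_pow_three_div_two_le_max {β : ℝ} (hβ : β ≤ 1) :
    (1 + β ^ 3) / 2 ≤ max (3 / 4) β := by
  rcases le_or_gt (β ^ 3) (1 / 2) with hb | hb
  · exact le_max_of_le_left (by linarith)
  · have hβ' : 1 / 2 < β := by
      by_contra! h
      nlinarith [mul_nonneg (sub_nonneg.2 h) (add_nonneg (sq_nonneg (β + 1 / 4))
        (by norm_num : (0 : ℝ) ≤ 3 / 16))]
    refine le_max_of_le_right ?_
    nlinarith [mul_nonneg (sub_nonneg.2 hβ) (sub_nonneg.2 hβ'.le)]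

theorem half_add_half_mul_exp_le_max_mul {M c h : ℝ} (hM : 0 ≤ M) (hc : 0 < c) (hh : 0 ≤ h) :
    M / 2 + M / 2 * exp (-h / c) ≤ max (3 / 4) (exp (-h / (3 * c))) * M := by
  have hβ : exp (-h / (3 * c)) ≤ 1 :=
    exp_le_one_iff.2 (div_nonpos_of_nonpos_of_nonneg (neg_nonpos.2 hh) (by positivity))
  have hβ3 : exp (-h / c) = exp (-h / (3 * c)) ^ 3 := by
    rw [← exp_nat_mul]; congr 1; push_cast; field_simp
  rw [hβ3]
  nlinarith [one_add_pow_three_div_two_le_max hβ]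

/-- **Two-step contraction of the delay map (second inequality of (pf2:6)).**
Fix `h > 0`, let `x : [0,h] → ℝ` be continuous with `x(t) + h > 0`, let `y` solve
`y′ = (x - 2y)/(2(x + h))` on `[0,h]` with `y(0) = x(h)`, suppose `y(t) + h > 0`
on `[0,h]`, and let `z` solve `z′ = (y - 2z)/(2(y + h))` on `[0,h]` with
`z(0) = y(h)`. Then `‖z‖ ≤ κ(‖x‖) ‖x‖` where `κ(r) = max(3/4, exp(-h/(3(r+h))))`. -/
theorem delay_map_two_step_contraction
    (h : ℝ) (hh : 0 < h) (x y z : ℝ → ℝ)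
    (hxc : ContinuousOn x (Set.Icc 0 h))
    (hxpos : ∀ t ∈ Set.Icc (0:ℝ) h, 0 < x t + h)
    (hy0 : y 0 = x h)
    (hyode : ∀ t ∈ Set.Icc (0:ℝ) h,
      HasDerivWithinAt y ((x t - 2 * y t) / (2 * (x t + h))) (Set.Icc 0 h) t)
    (hypos : ∀ t ∈ Set.Icc (0:ℝ) h, 0 < y t + h)
    (hz0 : z 0 = y h)
    (hzode : ∀ t ∈ Set.Icc (0:ℝ) h,
      HasDerivWithinAt z ((y t - 2 * z t) / (2 * (y t + h))) (Set.Icc 0 h) t)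
    (κ : ℝ → ℝ) (hκ : ∀ r, κ r = max (3/4) (Real.exp (-h / (3*(r + h))))) :
    (⨆ t ∈ Set.Icc (0:ℝ) h, |z t|)
      ≤ κ (⨆ s ∈ Set.Icc (0:ℝ) h, |x s|) * ⨆ s ∈ Set.Icc (0:ℝ) h, |x s| := by
  set M := ⨆ s ∈ Icc (0:ℝ) h, |x s|
  have hh' : h ∈ Icc 0 h := right_mem_Icc.2 hh.le
  have hxM : ∀ t ∈ Icc 0 h, |x t| ≤ M := fun t ht =>
    isCompact_Icc.le_biSup_of_continuousOn hxc.abs ht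
  have hM : 0 ≤ M := (abs_nonneg _).trans (hxM h hh')
  have hexp_le_one : ∀ t ∈ Icc 0 h, exp (-t / (M + h)) ≤ 1 := fun t ht =>
    exp_le_one_iff.2 (div_nonpos_of_nonpos_of_nonneg (neg_nonpos.2 ht.1) (by positivity))
  have hyM : ∀ t ∈ Icc 0 h, |y t| ≤ M / 2 + M / 2 * exp (-t / (M + h)) :=
    abs_le_half_add_mul_exp_of_hasDerivWithinAt (by positivity) hxM hxpos
      (fun t ht => by linarith [le_abs_self (x t), hxM t ht]) hyode
      (by rw [hy0]; linarith [hxM h hh'])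
  have hy_le_M : ∀ t ∈ Icc 0 h, |y t| ≤ M := fun t ht =>
    (hyM t ht).trans (by nlinarith [hexp_le_one t ht])
  have hzM : ∀ t ∈ Icc 0 h, |z t| ≤ M / 2 + M / 2 * exp (-h / (M + h)) * exp (-t / (M + h)) :=
    abs_le_half_add_mul_exp_of_hasDerivWithinAt (by positivity) hy_le_M hypos
      (fun t ht => by linarith [le_abs_self (y t), hy_le_M t ht]) hzode
      (by rw [hz0]; exact hyM h hh')
  have hκM : M / 2 + M / 2 * exp (-h / (M + h)) ≤ κ M * M :=
    hκ M ▸ half_add_half_mul_exp_le_max_mul hM (by positivity) hh.le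
  have hzκ : ∀ t ∈ Icc 0 h, |z t| ≤ κ M * M := fun t ht => by
    have := mul_le_mul_of_nonneg_left (hexp_le_one t ht)
      (by positivity : 0 ≤ M / 2 * exp (-h / (M + h)))
    linarith [hzM t ht]
  have hκM0 : 0 ≤ κ M * M := le_trans (by positivity) hκM
  exact Real.iSup_le (fun t => Real.iSup_le (hzκ t) hκM0) hκM0
end
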